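/- arXiv:2408.14733 — 2 statements merged into one kernel-verified Lean document; each statement's English description precedes it below -/
import Mathlib

section
/- Let J be the endomorphism of 𝔤₁ with J e₁ = e₂, J e₂ = −e₁, J e₃ = −e₆, J e₄ = e₅, J e₅ = −e₄, J e₆ = e₃, let w₃₅ ≠ 0, and let ω = e¹∧(w₁₂ e² − (w₂₃w₄₅/w₃₅) e⁵ + w₂₃ e⁶) + e²∧(w₂₃ e³ + (w₂₃w₄₅/w₃₅) e⁴) + e³∧(w₃₅ e⁵ + w₃₆ e⁶) + e⁴∧(w₄₅ e⁵ − w₃₅ e⁶). Then ω(JX,JY) = ω(X,Y) for all X, Y ∈ 𝔤₁, and ω∧dω = 0. -/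
open Finset

noncomputable section

/-- The underlying vector space `ℝ⁶`. -/
abbrev V : Type := Fin 6 → ℝ

/-- The `i`-th standard basis vector `eᵢ` (0-indexed: `e 0 = e₁`, …, `e 5 = e₆`). -/
def e (i : Fin 6) : V := Pi.single i 1

/-- The Lie bracket of the nilpotent Lie algebra 𝔤₁, with nonzero brackets
`[e₁,e₃]=e₄`, `[e₁,e₄]=e₆`, `[e₂,e₃]=e₅`, `[e₂,e₅]=e₆` (0-indexed below). -/
def bra (X Y : V) : V :=
  (X 0 * Y 2 - X 2 * Y 0) • e 3 + (X 1 * Y 2 - X 2 * Y 1) • e 4 +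
    (X 0 * Y 3 - X 3 * Y 0 + X 1 * Y 4 - X 4 * Y 1) • e 5

/-- The Chevalley–Eilenberg differential of a 2-form:
`dω(X,Y,Z) = −ω([X,Y],Z) + ω([X,Z],Y) − ω([Y,Z],X)`. -/
def dOm (ω : V → V → ℝ) (X Y Z : V) : ℝ :=
  -ω (bra X Y) Z + ω (bra X Z) Y - ω (bra Y Z) X

/-- The wedge product of a 2-form and a 3-form, as a 5-form:
`(ω∧τ)(X₁,…,X₅) = (1/(2!·3!)) Σ_{σ∈S₅} sgn(σ) ω(X_{σ1},X_{σ2}) τ(X_{σ3},X_{σ4},X_{σ5})`. -/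
def wedge23 (ω : V → V → ℝ) (τ : V → V → V → ℝ) (Xs : Fin 5 → V) : ℝ :=
  (1 / 12 : ℝ) * ∑ σ : Equiv.Perm (Fin 5),
    ((Equiv.Perm.sign σ : ℤ) : ℝ) *
      (ω (Xs (σ 0)) (Xs (σ 1)) * τ (Xs (σ 2)) (Xs (σ 3)) (Xs (σ 4)))

/-- The 2-form `ω = Σ_{i<j} w_{ij} e^i ∧ e^j` determined by the coefficients `w i j`
(only the entries with `i < j` are used). -/
def form2 (w : Fin 6 → Fin 6 → ℝ) (X Y : V) : ℝ :=
  ∑ i : Fin 6, ∑ j : Fin 6, if i < j then w i j * (X i * Y j - X j * Y i) else 0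

/-- The complex structure `J` of Magnin on 𝔤₁ (with `ξ₃₆ = 1`):
`J e₁ = e₂`, `J e₂ = −e₁`, `J e₃ = −e₆`, `J e₄ = e₅`, `J e₅ = −e₄`, `J e₆ = e₃`
(0-indexed below). -/
def Jc : V → V := fun X =>
  X 0 • e 1 - X 1 • e 0 - X 2 • e 5 + X 3 • e 4 - X 4 • e 3 + X 5 • e 2

/-- The 2-form `ω₂` of the second family of `J`-compatible semi-Kähler forms on 𝔤₁. -/
def omJ2 (w12 w23 w35 w36 w45 : ℝ) : V → V → ℝ :=
  form2
    ![![0, w12, 0, 0, -(w23 * w45 / w35), w23],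
      ![0, 0, w23, w23 * w45 / w35, 0, 0],
      ![0, 0, 0, 0, w35, w36],
      ![0, 0, 0, 0, w45, -w35],
      ![0, 0, 0, 0, 0, 0],
      ![0, 0, 0, 0, 0, 0]]

lemma omJ2_apply (w12 w23 w35 w36 w45 : ℝ) (X Y : V) :
    omJ2 w12 w23 w35 w36 w45 X Y =
      w12 * (X 0 * Y 1 - X 1 * Y 0)
      - (w23 * w45 / w35) * (X 0 * Y 4 - X 4 * Y 0)
      + w23 * (X 0 * Y 5 - X 5 * Y 0)
      + w23 * (X 1 * Y 2 - X 2 * Y 1)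
      + (w23 * w45 / w35) * (X 1 * Y 3 - X 3 * Y 1)
      + w35 * (X 2 * Y 4 - X 4 * Y 2)
      + w36 * (X 2 * Y 5 - X 5 * Y 2)
      + w45 * (X 3 * Y 4 - X 4 * Y 3)
      - w35 * (X 3 * Y 5 - X 5 * Y 3) := by
  simp (config := { decide := true }) only [omJ2, form2, Fin.sum_univ_six,
    show (5:Fin 6) = (4:Fin 5).succ from rfl,
    show (4:Fin 6) = (3:Fin 5).succ from rfl,
    show (3:Fin 6) = (2:Fin 5).succ from rfl,
    show (2:Fin 6) = (1:Fin 5).succ from rfl,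
    show (1:Fin 6) = (0:Fin 5).succ from rfl,
    show (4:Fin 5) = (3:Fin 4).succ from rfl,
    show (3:Fin 5) = (2:Fin 4).succ from rfl,
    show (2:Fin 5) = (1:Fin 4).succ from rfl,
    show (1:Fin 5) = (0:Fin 4).succ from rfl,
    show (3:Fin 4) = (2:Fin 3).succ from rfl,
    show (2:Fin 4) = (1:Fin 3).succ from rfl,
    show (1:Fin 4) = (0:Fin 3).succ from rfl,
    show (2:Fin 3) = (1:Fin 2).succ from rfl,
    show (1:Fin 3) = (0:Fin 2).succ from rfl,
    show (1:Fin 2) = (0:Fin 1).succ from rfl,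
    Matrix.cons_val_succ, Matrix.cons_val_zero,
    if_true, if_false]
  norm_num
  ring

lemma bra0 (X Y : V) : bra X Y 0 = 0 := by
  simp (config := { decide := true }) [bra, e, Pi.single_apply]
lemma bra1 (X Y : V) : bra X Y 1 = 0 := by
  simp (config := { decide := true }) [bra, e, Pi.single_apply]
lemma bra2 (X Y : V) : bra X Y 2 = 0 := by
  simp (config := { decide := true }) [bra, e, Pi.single_apply]
lemma bra3 (X Y : V) : bra X Y 3 = X 0 * Y 2 - X 2 * Y 0 := by
  simp (config := { decide := true }) [bra, e, Pi.single_apply]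
lemma bra4 (X Y : V) : bra X Y 4 = X 1 * Y 2 - X 2 * Y 1 := by
  simp (config := { decide := true }) [bra, e, Pi.single_apply]
lemma bra5 (X Y : V) : bra X Y 5 = X 0 * Y 3 - X 3 * Y 0 + X 1 * Y 4 - X 4 * Y 1 := by
  simp (config := { decide := true }) [bra, e, Pi.single_apply]
lemma Jc0 (X : V) : Jc X 0 = -X 1 := by
  simp (config := { decide := true }) [Jc, e, Pi.single_apply]
lemma Jc1 (X : V) : Jc X 1 = X 0 := by
  simp (config := { decide := true }) [Jc, e, Pi.single_apply]
lemma Jc2 (X : V) : Jc X 2 = X 5 := by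
  simp (config := { decide := true }) [Jc, e, Pi.single_apply]
lemma Jc3 (X : V) : Jc X 3 = -X 4 := by
  simp (config := { decide := true }) [Jc, e, Pi.single_apply]
lemma Jc4 (X : V) : Jc X 4 = X 3 := by
  simp (config := { decide := true }) [Jc, e, Pi.single_apply]
lemma Jc5 (X : V) : Jc X 5 = -X 2 := by
  simp (config := { decide := true }) [Jc, e, Pi.single_apply]

open Equiv Equiv.Perm in
lemma perm5_sum (f : Equiv.Perm (Fin 5) → ℝ) :
    ∑ σ : Equiv.Perm (Fin 5), f σ =
      ∑ a : Fin 5, ∑ b : Fin 4, ∑ c : Fin 3, ∑ d : Fin 2,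
        f (decomposeFin.symm (a, decomposeFin.symm (b, decomposeFin.symm (c,
            decomposeFin.symm (d, 1))))) := by
  rw [← Equiv.sum_comp (decomposeFin (n := 4)).symm, Fintype.sum_prod_type]
  congr 1; ext a
  rw [← Equiv.sum_comp (decomposeFin (n := 3)).symm, Fintype.sum_prod_type]
  congr 1; ext b
  rw [← Equiv.sum_comp (decomposeFin (n := 2)).symm, Fintype.sum_prod_type]
  congr 1; ext c
  rw [← Equiv.sum_comp (decomposeFin (n := 1)).symm, Fintype.sum_prod_type]
  congr 1; ext d
  exact Fintype.sum_subsingleton _ 1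

set_option maxHeartbeats 2000000 in
lemma key (ω : V → V → ℝ) (τ : V → V → V → ℝ) (g : V → V → ℝ) (t : V → V → V → ℝ)
    (hg : ∀ X Y, ω X Y = g X Y - g Y X)
    (ht : ∀ X Y Z, τ X Y Z =
      (t X Y Z - t Y X Z) + (t Y Z X - t Z Y X) + (t Z X Y - t X Z Y))
    (Xs : Fin 5 → V) :
    wedge23 ω τ Xs =
      ω (Xs 0) (Xs 1) * τ (Xs 2) (Xs 3) (Xs 4)
      - ω (Xs 0) (Xs 2) * τ (Xs 1) (Xs 3) (Xs 4)
      + ω (Xs 0) (Xs 3) * τ (Xs 1) (Xs 2) (Xs 4)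
      - ω (Xs 0) (Xs 4) * τ (Xs 1) (Xs 2) (Xs 3)
      + ω (Xs 1) (Xs 2) * τ (Xs 0) (Xs 3) (Xs 4)
      - ω (Xs 1) (Xs 3) * τ (Xs 0) (Xs 2) (Xs 4)
      + ω (Xs 1) (Xs 4) * τ (Xs 0) (Xs 2) (Xs 3)
      + ω (Xs 2) (Xs 3) * τ (Xs 0) (Xs 1) (Xs 4)
      - ω (Xs 2) (Xs 4) * τ (Xs 0) (Xs 1) (Xs 3)
      + ω (Xs 3) (Xs 4) * τ (Xs 0) (Xs 1) (Xs 2) := by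
  rw [wedge23, perm5_sum]
  simp only [Fin.sum_univ_five, Fin.sum_univ_four, Fin.sum_univ_three, Fin.sum_univ_two]
  simp (config := { decide := true }) only [
    show (1:Fin 5) = (0:Fin 4).succ from rfl,
    show (2:Fin 5) = (1:Fin 4).succ from rfl,
    show (3:Fin 5) = (2:Fin 4).succ from rfl,
    show (4:Fin 5) = (3:Fin 4).succ from rfl,
    show (1:Fin 4) = (0:Fin 3).succ from rfl,
    show (2:Fin 4) = (1:Fin 3).succ from rfl,
    show (3:Fin 4) = (2:Fin 3).succ from rfl,
    show (1:Fin 3) = (0:Fin 2).succ from rfl,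
    show (2:Fin 3) = (1:Fin 2).succ from rfl,
    show (1:Fin 2) = (0:Fin 1).succ from rfl,
    Equiv.Perm.decomposeFin_symm_apply_zero,
    Equiv.Perm.decomposeFin_symm_apply_succ,
    Equiv.Perm.decomposeFin.symm_sign,
    Equiv.Perm.sign_one, Equiv.Perm.one_apply,
    Equiv.swap_apply_def]
  norm_num [hg, ht]
  ring


set_option maxHeartbeats 4000000 in
/-- for `w₃₅ ≠ 0`, the 2-form `ω₂` is compatible with `J`
(`ω(JX,JY) = ω(X,Y)`) and satisfies `ω∧dω = 0`. -/
theorem statement7 (w12 w23 w35 w36 w45 : ℝ) (h : w35 ≠ 0) :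
    (∀ X Y : V, omJ2 w12 w23 w35 w36 w45 (Jc X) (Jc Y) =
      omJ2 w12 w23 w35 w36 w45 X Y) ∧
    (∀ Xs : Fin 5 → V,
      wedge23 (omJ2 w12 w23 w35 w36 w45)
        (dOm (omJ2 w12 w23 w35 w36 w45)) Xs = 0) := by

  constructor
  · intro X Y
    rw [omJ2_apply, omJ2_apply]
    simp only [Jc0, Jc1, Jc2, Jc3, Jc4, Jc5]
    ring
  · intro Xs
    rw [key (omJ2 w12 w23 w35 w36 w45) (dOm (omJ2 w12 w23 w35 w36 w45))
      (fun X Y => w12 * (X 0 * Y 1) - (w23 * w45 / w35) * (X 0 * Y 4)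
        + w23 * (X 0 * Y 5) + w23 * (X 1 * Y 2) + (w23 * w45 / w35) * (X 1 * Y 3)
        + w35 * (X 2 * Y 4) + w36 * (X 2 * Y 5) + w45 * (X 3 * Y 4) - w35 * (X 3 * Y 5))
      (fun X Y Z => -(1/2 : ℝ) * omJ2 w12 w23 w35 w36 w45 (bra X Y) Z)
      (fun X Y => by rw [omJ2_apply]; ring)
      (fun X Y Z => by
        simp only [dOm, omJ2_apply, bra0, bra1, bra2, bra3, bra4, bra5]
        ring)]
    simp only [dOm, omJ2_apply, bra0, bra1, bra2, bra3, bra4, bra5]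
    field_simp
    ring
end
end

section
/- Let J be the endomorphism of 𝔤₁ with J e₁ = e₂, J e₂ = −e₁, J e₃ = −e₆, J e₄ = e₅, J e₅ = −e₄, J e₆ = e₃, let w₄₅ ≠ 0, and let ω = e¹∧(w₁₂ e² − (w₁₅w₃₄/w₄₅) e³ + w₁₅ e⁵) + e²∧(−w₁₅ e⁴ + (w₁₅w₃₄/w₄₅) e⁶) + e³∧(w₃₄ e⁴ + w₃₆ e⁶) + w₄₅ e⁴∧e⁵ + w₃₄ e⁵∧e⁶. Then ω(JX,JY) = ω(X,Y) for all X, Y ∈ 𝔤₁, and ω∧dω = 0. -/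
set_option maxRecDepth 100000


open Finset

noncomputable section

/-- The 2-form `ω₃` of the third family of `J`-compatible semi-Kähler forms on 𝔤₁. -/
def omJ3 (w12 w15 w34 w36 w45 : ℝ) : V → V → ℝ :=
  form2
    ![![0, w12, -(w15 * w34 / w45), 0, w15, 0],
      ![0, 0, 0, -w15, 0, w15 * w34 / w45],
      ![0, 0, 0, w34, 0, w36],
      ![0, 0, 0, 0, w45, 0],
      ![0, 0, 0, 0, 0, w34],
      ![0, 0, 0, 0, 0, 0]]


lemma form2_apply (w : Fin 6 → Fin 6 → ℝ) (X Y : V) :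
    form2 w X Y =
      w 0 1 * (X 0 * Y 1 - X 1 * Y 0) + w 0 2 * (X 0 * Y 2 - X 2 * Y 0)
      + w 0 3 * (X 0 * Y 3 - X 3 * Y 0) + w 0 4 * (X 0 * Y 4 - X 4 * Y 0)
      + w 0 5 * (X 0 * Y 5 - X 5 * Y 0) + w 1 2 * (X 1 * Y 2 - X 2 * Y 1)
      + w 1 3 * (X 1 * Y 3 - X 3 * Y 1) + w 1 4 * (X 1 * Y 4 - X 4 * Y 1)
      + w 1 5 * (X 1 * Y 5 - X 5 * Y 1) + w 2 3 * (X 2 * Y 3 - X 3 * Y 2)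
      + w 2 4 * (X 2 * Y 4 - X 4 * Y 2) + w 2 5 * (X 2 * Y 5 - X 5 * Y 2)
      + w 3 4 * (X 3 * Y 4 - X 4 * Y 3) + w 3 5 * (X 3 * Y 5 - X 5 * Y 3)
      + w 4 5 * (X 4 * Y 5 - X 5 * Y 4) := by
  simp [form2, Fin.sum_univ_six]
  ring

lemma om_apply (w12 w15 w34 w36 w45 : ℝ) (X Y : V) :
    omJ3 w12 w15 w34 w36 w45 X Y =
      w12 * (X 0 * Y 1 - X 1 * Y 0) - w15 * w34 / w45 * (X 0 * Y 2 - X 2 * Y 0)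
      + w15 * (X 0 * Y 4 - X 4 * Y 0) - w15 * (X 1 * Y 3 - X 3 * Y 1)
      + w15 * w34 / w45 * (X 1 * Y 5 - X 5 * Y 1) + w34 * (X 2 * Y 3 - X 3 * Y 2)
      + w36 * (X 2 * Y 5 - X 5 * Y 2) + w45 * (X 3 * Y 4 - X 4 * Y 3)
      + w34 * (X 4 * Y 5 - X 5 * Y 4) := by
  have v5 : ∀ a b c d f g : ℝ, ![a,b,c,d,f,g] 5 = g := fun _ _ _ _ _ _ => rfl
  rw [omJ3, form2_apply]
  simp only [Matrix.cons_val]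
  norm_num [v5, Matrix.cons_val_zero, Matrix.cons_val_one, Matrix.head_cons, Matrix.cons_val_succ]
  ring

lemma bra_eval (X Y : V) :
    bra X Y 0 = 0 ∧ bra X Y 1 = 0 ∧ bra X Y 2 = 0 ∧
    bra X Y 3 = X 0 * Y 2 - X 2 * Y 0 ∧ bra X Y 4 = X 1 * Y 2 - X 2 * Y 1 ∧
    bra X Y 5 = X 0 * Y 3 - X 3 * Y 0 + X 1 * Y 4 - X 4 * Y 1 := by
  refine ⟨?_, ?_, ?_, ?_, ?_, ?_⟩ <;> simp [bra, e, Pi.single_apply]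

lemma Jc_eval (X : V) :
    Jc X 0 = -X 1 ∧ Jc X 1 = X 0 ∧ Jc X 2 = X 5 ∧
    Jc X 3 = -X 4 ∧ Jc X 4 = X 3 ∧ Jc X 5 = -X 2 := by
  refine ⟨?_, ?_, ?_, ?_, ?_, ?_⟩ <;> simp [Jc, e, Pi.single_apply]

lemma dom_apply (w12 w15 w34 w36 w45 : ℝ) (X Y Z : V) :
    dOm (omJ3 w12 w15 w34 w36 w45) X Y Z = 2 * w15 * (X 0 * (Y 1 * Z 2 - Y 2 * Z 1) - X 1 * (Y 0 * Z 2 - Y 2 * Z 0) + X 2 * (Y 0 * Z 1 - Y 1 * Z 0)) - w15 * w34 / w45 * (X 0 * (Y 1 * Z 3 - Y 3 * Z 1) - X 1 * (Y 0 * Z 3 - Y 3 * Z 0) + X 3 * (Y 0 * Z 1 - Y 1 * Z 0)) - w36 * (X 0 * (Y 2 * Z 3 - Y 3 * Z 2) - X 2 * (Y 0 * Z 3 - Y 3 * Z 0) + X 3 * (Y 0 * Z 2 - Y 2 * Z 0)) + w34 * (X 0 * (Y 3 * Z 4 - Y 4 * Z 3) - X 3 * (Y 0 * Z 4 - Y 4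 * Z 0) + X 4 * (Y 0 * Z 3 - Y 3 * Z 0)) - w45 * (X 0 * (Y 2 * Z 4 - Y 4 * Z 2) - X 2 * (Y 0 * Z 4 - Y 4 * Z 0) + X 4 * (Y 0 * Z 2 - Y 2 * Z 0)) - w36 * (X 1 * (Y 2 * Z 4 - Y 4 * Z 2) - X 2 * (Y 1 * Z 4 - Y 4 * Z 1) + X 4 * (Y 1 * Z 2 - Y 2 * Z 1)) + w45 * (X 1 * (Y 2 * Z 3 - Y 3 * Z 2) - X 2 * (Y 1 * Z 3 - Y 3 * Z 1) + X 3 * (Y 1 * Z 2 - Y 2 * Z 1)) - w34 * (X 1 * (Y 2 * Z 5 - Y 5 * Z 2) - X 2 * (Y 1 * Z 5 - Y 5 * Z 1) + X 5 * (Y 1 * Z 2 - Y 2 * Z 1)) := by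
  obtain ⟨hXY0, hXY1, hXY2, hXY3, hXY4, hXY5⟩ := bra_eval X Y
  obtain ⟨hXZ0, hXZ1, hXZ2, hXZ3, hXZ4, hXZ5⟩ := bra_eval X Z
  obtain ⟨hYZ0, hYZ1, hYZ2, hYZ3, hYZ4, hYZ5⟩ := bra_eval Y Z
  rw [dOm, om_apply, om_apply, om_apply,
    hXY0, hXY1, hXY2, hXY3, hXY4, hXY5, hXZ0, hXZ1, hXZ2, hXZ3, hXZ4, hXZ5,
    hYZ0, hYZ1, hYZ2, hYZ3, hYZ4, hYZ5]
  ring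

lemma om_skew (w12 w15 w34 w36 w45 : ℝ) (X Y : V) :
    omJ3 w12 w15 w34 w36 w45 Y X = -omJ3 w12 w15 w34 w36 w45 X Y := by
  rw [om_apply, om_apply]; ring

lemma dom_skew1 (w12 w15 w34 w36 w45 : ℝ) (X Y Z : V) :
    dOm (omJ3 w12 w15 w34 w36 w45) Y X Z = -dOm (omJ3 w12 w15 w34 w36 w45) X Y Z := by
  rw [dom_apply, dom_apply]; ring

lemma dom_skew2 (w12 w15 w34 w36 w45 : ℝ) (X Y Z : V) :
    dOm (omJ3 w12 w15 w34 w36 w45) X Z Y = -dOm (omJ3 w12 w15 w34 w36 w45) X Y Z := by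
  rw [dom_apply, dom_apply]; ring

set_option maxHeartbeats 4000000 in
lemma perm5_sum_s8 (a : Fin 5 → Fin 5 → ℝ) (t : Fin 5 → Fin 5 → Fin 5 → ℝ)
    (ha : ∀ i j, a j i = -a i j)
    (ht1 : ∀ i j k, t j i k = -t i j k) (ht2 : ∀ i j k, t i k j = -t i j k) :
    ∑ σ : Equiv.Perm (Fin 5), ((Equiv.Perm.sign σ : ℤ) : ℝ) *
      (a (σ 0) (σ 1) * t (σ 2) (σ 3) (σ 4)) =
    12 * (a 0 1 * t 2 3 4 - a 0 2 * t 1 3 4 + a 0 3 * t 1 2 4 - a 0 4 * t 1 2 3 + a 1 2 * t 0 3 4 - a 1 3 * t 0 2 4 + a 1 4 * t 0 2 3 + a 2 3 * t 0 1 4 - a 2 4 * t 0 1 3 + a 3 4 * t 0 1 2) := by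
  have ha10 : a 1 0 = -a 0 1 := ha 0 1
  have ha20 : a 2 0 = -a 0 2 := ha 0 2
  have ha30 : a 3 0 = -a 0 3 := ha 0 3
  have ha40 : a 4 0 = -a 0 4 := ha 0 4
  have ha21 : a 2 1 = -a 1 2 := ha 1 2
  have ha31 : a 3 1 = -a 1 3 := ha 1 3
  have ha41 : a 4 1 = -a 1 4 := ha 1 4
  have ha32 : a 3 2 = -a 2 3 := ha 2 3
  have ha42 : a 4 2 = -a 2 4 := ha 2 4
  have ha43 : a 4 3 = -a 3 4 := ha 3 4
  have ht_021 : t 0 2 1 = -t 0 1 2 := by rw [ht2 0 1 2]; try ring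
  have ht_031 : t 0 3 1 = -t 0 1 3 := by rw [ht2 0 1 3]; try ring
  have ht_032 : t 0 3 2 = -t 0 2 3 := by rw [ht2 0 2 3]; try ring
  have ht_041 : t 0 4 1 = -t 0 1 4 := by rw [ht2 0 1 4]; try ring
  have ht_042 : t 0 4 2 = -t 0 2 4 := by rw [ht2 0 2 4]; try ring
  have ht_043 : t 0 4 3 = -t 0 3 4 := by rw [ht2 0 3 4]; try ring
  have ht_102 : t 1 0 2 = -t 0 1 2 := by rw [ht1 0 1 2]; try ring
  have ht_103 : t 1 0 3 = -t 0 1 3 := by rw [ht1 0 1 3]; try ring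
  have ht_104 : t 1 0 4 = -t 0 1 4 := by rw [ht1 0 1 4]; try ring
  have ht_120 : t 1 2 0 = t 0 1 2 := by rw [ht2 1 0 2, ht1 0 1 2]; try ring
  have ht_130 : t 1 3 0 = t 0 1 3 := by rw [ht2 1 0 3, ht1 0 1 3]; try ring
  have ht_132 : t 1 3 2 = -t 1 2 3 := by rw [ht2 1 2 3]; try ring
  have ht_140 : t 1 4 0 = t 0 1 4 := by rw [ht2 1 0 4, ht1 0 1 4]; try ring
  have ht_142 : t 1 4 2 = -t 1 2 4 := by rw [ht2 1 2 4]; try ring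
  have ht_143 : t 1 4 3 = -t 1 3 4 := by rw [ht2 1 3 4]; try ring
  have ht_201 : t 2 0 1 = t 0 1 2 := by rw [ht1 0 2 1, ht2 0 1 2]; try ring
  have ht_203 : t 2 0 3 = -t 0 2 3 := by rw [ht1 0 2 3]; try ring
  have ht_204 : t 2 0 4 = -t 0 2 4 := by rw [ht1 0 2 4]; try ring
  have ht_210 : t 2 1 0 = -t 0 1 2 := by rw [ht1 1 2 0, ht2 1 0 2, ht1 0 1 2]; try ring
  have ht_213 : t 2 1 3 = -t 1 2 3 := by rw [ht1 1 2 3]; try ring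
  have ht_214 : t 2 1 4 = -t 1 2 4 := by rw [ht1 1 2 4]; try ring
  have ht_230 : t 2 3 0 = t 0 2 3 := by rw [ht2 2 0 3, ht1 0 2 3]; try ring
  have ht_231 : t 2 3 1 = t 1 2 3 := by rw [ht2 2 1 3, ht1 1 2 3]; try ring
  have ht_240 : t 2 4 0 = t 0 2 4 := by rw [ht2 2 0 4, ht1 0 2 4]; try ring
  have ht_241 : t 2 4 1 = t 1 2 4 := by rw [ht2 2 1 4, ht1 1 2 4]; try ring
  have ht_243 : t 2 4 3 = -t 2 3 4 := by rw [ht2 2 3 4]; try ring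
  have ht_301 : t 3 0 1 = t 0 1 3 := by rw [ht1 0 3 1, ht2 0 1 3]; try ring
  have ht_302 : t 3 0 2 = t 0 2 3 := by rw [ht1 0 3 2, ht2 0 2 3]; try ring
  have ht_304 : t 3 0 4 = -t 0 3 4 := by rw [ht1 0 3 4]; try ring
  have ht_310 : t 3 1 0 = -t 0 1 3 := by rw [ht1 1 3 0, ht2 1 0 3, ht1 0 1 3]; try ring
  have ht_312 : t 3 1 2 = t 1 2 3 := by rw [ht1 1 3 2, ht2 1 2 3]; try ring
  have ht_314 : t 3 1 4 = -t 1 3 4 := by rw [ht1 1 3 4]; try ring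
  have ht_320 : t 3 2 0 = -t 0 2 3 := by rw [ht1 2 3 0, ht2 2 0 3, ht1 0 2 3]; try ring
  have ht_321 : t 3 2 1 = -t 1 2 3 := by rw [ht1 2 3 1, ht2 2 1 3, ht1 1 2 3]; try ring
  have ht_324 : t 3 2 4 = -t 2 3 4 := by rw [ht1 2 3 4]; try ring
  have ht_340 : t 3 4 0 = t 0 3 4 := by rw [ht2 3 0 4, ht1 0 3 4]; try ring
  have ht_341 : t 3 4 1 = t 1 3 4 := by rw [ht2 3 1 4, ht1 1 3 4]; try ring
  have ht_342 : t 3 4 2 = t 2 3 4 := by rw [ht2 3 2 4, ht1 2 3 4]; try ring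
  have ht_401 : t 4 0 1 = t 0 1 4 := by rw [ht1 0 4 1, ht2 0 1 4]; try ring
  have ht_402 : t 4 0 2 = t 0 2 4 := by rw [ht1 0 4 2, ht2 0 2 4]; try ring
  have ht_403 : t 4 0 3 = t 0 3 4 := by rw [ht1 0 4 3, ht2 0 3 4]; try ring
  have ht_410 : t 4 1 0 = -t 0 1 4 := by rw [ht1 1 4 0, ht2 1 0 4, ht1 0 1 4]; try ring
  have ht_412 : t 4 1 2 = t 1 2 4 := by rw [ht1 1 4 2, ht2 1 2 4]; try ring
  have ht_413 : t 4 1 3 = t 1 3 4 := by rw [ht1 1 4 3, ht2 1 3 4]; try ring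
  have ht_420 : t 4 2 0 = -t 0 2 4 := by rw [ht1 2 4 0, ht2 2 0 4, ht1 0 2 4]; try ring
  have ht_421 : t 4 2 1 = -t 1 2 4 := by rw [ht1 2 4 1, ht2 2 1 4, ht1 1 2 4]; try ring
  have ht_423 : t 4 2 3 = t 2 3 4 := by rw [ht1 2 4 3, ht2 2 3 4]; try ring
  have ht_430 : t 4 3 0 = -t 0 3 4 := by rw [ht1 3 4 0, ht2 3 0 4, ht1 0 3 4]; try ring
  have ht_431 : t 4 3 1 = -t 1 3 4 := by rw [ht1 3 4 1, ht2 3 1 4, ht1 1 3 4]; try ring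
  have ht_432 : t 4 3 2 = -t 2 3 4 := by rw [ht1 3 4 2, ht2 3 2 4, ht1 2 3 4]; try ring
  simp only [Finset.univ_perm_fin_succ, Finset.sum_map, Equiv.toEmbedding_apply,
    Fintype.sum_prod_type, Finset.univ_unique, Finset.sum_singleton,
    Equiv.Perm.decomposeFin.symm_sign,
    show ((4:Fin 5)) = (3:Fin 4).succ from rfl,
    show ((3:Fin 5)) = (2:Fin 4).succ from rfl,
    show ((2:Fin 5)) = (1:Fin 4).succ from rfl,
    show ((3:Fin 4)) = (2:Fin 3).succ from rfl,
    show ((2:Fin 4)) = (1:Fin 3).succ from rfl,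
    show ((2:Fin 3)) = (1:Fin 2).succ from rfl,
    Equiv.Perm.decomposeFin_symm_apply_zero, Equiv.Perm.decomposeFin_symm_apply_succ,
    Equiv.Perm.decomposeFin_symm_apply_one,
    Fin.sum_univ_five, Fin.sum_univ_four, Fin.sum_univ_three, Fin.sum_univ_two, Fin.sum_univ_one]
  norm_num [Equiv.swap_apply_def, Fin.ext_iff]
  simp only [show (((0:Fin 1)).succ) = (1:Fin 2) from rfl, show (((0:Fin 2)).succ) = (1:Fin 3) from rfl, show (((1:Fin 2)).succ) = (2:Fin 3) from rfl, show (((0:Fin 3)).succ) = (1:Fin 4) from rfl, show (((1:Fin 3)).succ) = (2:Fin 4) from rfl, show (((2:Fin 3)).succ) = (3:Fin 4) from rfl, show (((0:Fin 4)).succ) = (1:Fin 5) from rfl, show (((1:Fin 4)).succ) = (2:Fin 5) from rfl, show (((2:Fin 4)).succ) = (3:Fin 5) from rfl, show (((3:Fin 4)).succ) = (4:Fin 5) from rfl]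
  simp only [ha10, ha20, ha30, ha40, ha21, ha31, ha41, ha32, ha42, ha43, ht_021, ht_031, ht_032, ht_041, ht_042, ht_043, ht_102, ht_103, ht_104, ht_120, ht_130, ht_132, ht_140, ht_142, ht_143, ht_201, ht_203, ht_204, ht_210, ht_213, ht_214, ht_230, ht_231, ht_240, ht_241, ht_243, ht_301, ht_302, ht_304, ht_310, ht_312, ht_314, ht_320, ht_321, ht_324, ht_340, ht_341, ht_342, ht_401, ht_402, ht_403, ht_410, ht_412, ht_413, ht_420, ht_421, ht_423, ht_430, ht_431, ht_432]
  ring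


/-- for `w₄₅ ≠ 0`, the 2-form `ω₃` is compatible with `J`
(`ω(JX,JY) = ω(X,Y)`) and satisfies `ω∧dω = 0`. -/
theorem statement8 (w12 w15 w34 w36 w45 : ℝ) (h : w45 ≠ 0) :
    (∀ X Y : V, omJ3 w12 w15 w34 w36 w45 (Jc X) (Jc Y) =
      omJ3 w12 w15 w34 w36 w45 X Y) ∧
    (∀ Xs : Fin 5 → V,
      wedge23 (omJ3 w12 w15 w34 w36 w45)
        (dOm (omJ3 w12 w15 w34 w36 w45)) Xs = 0) := by
  constructor
  · intro X Y
    obtain ⟨jX0, jX1, jX2, jX3, jX4, jX5⟩ := Jc_eval X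
    obtain ⟨jY0, jY1, jY2, jY3, jY4, jY5⟩ := Jc_eval Y
    rw [om_apply, om_apply, jX0, jX1, jX2, jX3, jX4, jX5, jY0, jY1, jY2, jY3, jY4, jY5]
    ring
  · intro Xs
    have key := perm5_sum_s8 (fun i j => omJ3 w12 w15 w34 w36 w45 (Xs i) (Xs j))
      (fun i j k => dOm (omJ3 w12 w15 w34 w36 w45) (Xs i) (Xs j) (Xs k))
      (fun i j => om_skew w12 w15 w34 w36 w45 (Xs i) (Xs j))
      (fun i j k => dom_skew1 w12 w15 w34 w36 w45 (Xs i) (Xs j) (Xs k))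
      (fun i j k => dom_skew2 w12 w15 w34 w36 w45 (Xs i) (Xs j) (Xs k))
    beta_reduce at key
    rw [wedge23, key]
    simp only [om_apply, dom_apply]
    field_simp
    ring
end
end
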